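/- arXiv:1802.09503 — 3 statements merged into one kernel-verified Lean document; each statement's English description precedes it below -/
import Mathlib

section
/- For every real number σ ≥ 1 and every positive integer b, there exists a proper online algorithm A for σ-interval coloring such that for every positive integer ω and every finite sequence of closed intervals, each of length in [1,σ], that is ω-colorable, the number of colors A uses on the sequence is at most ⌈b·(1+σ)⌉ · (ω/b + b − 1). -/
/-- Two closed intervals `[I.1, I.2]` and `[J.1, J.2]` intersect. -/
def Intersects (I J : ℝ × ℝ) : Prop := I.1 ≤ J.2 ∧ J.1 ≤ I.2

/-- Every interval in the sequence has length in `[1, σ]`. -/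
def LengthsIn (σ : ℝ) (s : List (ℝ × ℝ)) : Prop :=
  ∀ I ∈ s, 1 ≤ I.2 - I.1 ∧ I.2 - I.1 ≤ σ

/-- `A` is a proper online algorithm for `σ`-interval coloring: on every input
sequence of intervals with lengths in `[1, σ]`, any two intersecting intervals
receive distinct colors (the color of the `i`-th interval is the value of `A`
on the prefix of length `i + 1`). -/
def ProperAlg (σ : ℝ) (A : List (ℝ × ℝ) → ℕ) : Prop :=
  ∀ s : List (ℝ × ℝ), LengthsIn σ s →
    ∀ i j : Fin s.length, i < j → Intersects (s.get i) (s.get j) →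
      A (s.take ((i : ℕ) + 1)) ≠ A (s.take ((j : ℕ) + 1))

/-- The intersection graph of the sequence `s` admits a proper coloring
with at most `ω` colors. -/
def Colorable (ω : ℕ) (s : List (ℝ × ℝ)) : Prop :=
  ∃ c : Fin s.length → Fin ω,
    ∀ i j : Fin s.length, i ≠ j → Intersects (s.get i) (s.get j) → c i ≠ c j

/-- The number of distinct colors used by the online algorithm `A`
on the input sequence `s`. -/
def colorsUsed (A : List (ℝ × ℝ) → ℕ) (s : List (ℝ × ℝ)) : ℕ :=
  ((Finset.range s.length).image (fun i => A (s.take (i + 1)))).card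

/-!
Cut the line into columns of width `1/b`; the interval `i` lies in column `p = ⌊b lᵢ⌋`. If `r` is
its rank among the earlier intervals of column `p`, it is put into the cell `[c, c + b)` of columns
whose start `c` is the largest integer `≤ p` with `c ≡ r (mod b)`, and it receives the color
`(c mod M) + M j`, where `j` is its rank among the earlier intervals of that cell and
`M = ⌈b (1 + σ)⌉`.

Intervals whose columns lie in `b` consecutive columns start less than `1` apart, so they pairwise
intersect and there are at most `ω` of them. Since the ranks in a column are dealt out round-robin,
a cell receives at most `⌈m / b⌉` of the `m` intervals of each of its columns, hence at most
`(ω + b (b - 1)) / b` intervals in all; this bounds `j`. Intersecting intervals start at most `σ`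
apart, so their cells start fewer than `M` apart: equal colors force the same cell, in which the
ranks `j` differ.
-/

open Finset

section PrefixRank

variable {α : Type*} [DecidableEq α]

def prefixRank (f : ℕ → α) (i : ℕ) : ℕ := #{k ∈ range i | f k = f i}

lemma prefixRank_congr {f g : ℕ → α} {i : ℕ} (h : ∀ k ≤ i, f k = g k) :
    prefixRank f i = prefixRank g i := by
  rw [prefixRank, prefixRank, h i le_rfl]
  exact congrArg card <| filter_congr fun k hk => by rw [h k (mem_range.1 hk).le]

lemma card_filter_range_lt_card {f : ℕ → α} {i j : ℕ} (hij : i < j) :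
    #{k ∈ range i | f k = f i} < #{k ∈ range j | f k = f i} := by
  refine card_lt_card <| (ssubset_iff_of_subset ?_).2 ⟨i, by simp [hij], by simp⟩
  exact filter_subset_filter _ (range_subset_range.2 hij.le)

lemma prefixRank_lt_prefixRank {f : ℕ → α} {i j : ℕ} (hij : i < j) (h : f i = f j) :
    prefixRank f i < prefixRank f j := by
  simpa only [prefixRank, h] using card_filter_range_lt_card (f := f) hij

lemma prefixRank_lt_card {f : ℕ → α} {i n : ℕ} (hi : i < n) :
    prefixRank f i < #{k ∈ range n | f k = f i} :=
  card_filter_range_lt_card hi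

lemma prefixRank_injOn (f : ℕ → α) (a : α) : Set.InjOn (prefixRank f) {k | f k = a} := by
  intro i hi j hj hij
  rcases lt_trichotomy i j with h | h | h
  · exact absurd hij (prefixRank_lt_prefixRank h (hi.trans hj.symm)).ne
  · exact h
  · exact absurd hij (prefixRank_lt_prefixRank h (hj.trans hi.symm)).ne'

end PrefixRank

lemma mul_card_le_of_modEq {ι : Type*} {S : Finset ι} {g : ι → ℕ} {b c : ℕ} (hb : 0 < b)
    (hinj : Set.InjOn g S) (hlt : ∀ i ∈ S, g i < c)
    (hmod : ∀ i ∈ S, ∀ j ∈ S, g i ≡ g j [MOD b]) :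
    b * #S ≤ c + (b - 1) := by
  have hquot : Set.MapsTo (g · / b) S (range ((c + (b - 1)) / b)) := by
    intro i hi
    have hgi := hlt i hi
    have hdiv := Nat.div_mul_le_self (g i) b
    rw [mem_coe, mem_range, Nat.lt_iff_add_one_le, Nat.le_div_iff_mul_le hb, add_one_mul]
    dsimp only
    omega
  have hquot_inj : Set.InjOn (g · / b) S := fun i hi j hj h => hinj hi hj <| by
    rw [← Nat.div_add_mod (g i) b, ← Nat.div_add_mod (g j) b, show g i / b = g j / b from h,
      hmod i hi j hj]
  calc b * #S ≤ b * ((c + (b - 1)) / b) := by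
        simpa using Nat.mul_le_mul_left b (card_le_card_of_injOn _ hquot hquot_inj)
    _ ≤ c + (b - 1) := Nat.mul_div_le _ _

lemma Intersects.abs_fst_sub_le {σ : ℝ} {I J : ℝ × ℝ} (h : Intersects I J)
    (hI : I.2 - I.1 ≤ σ) (hJ : J.2 - J.1 ≤ σ) : |I.1 - J.1| ≤ σ :=
  abs_sub_le_iff.2 ⟨by linarith [h.1], by linarith [h.2]⟩

lemma intersects_of_abs_fst_sub_le_one {I J : ℝ × ℝ} (hI : 1 ≤ I.2 - I.1) (hJ : 1 ≤ J.2 - J.1)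
    (h : |I.1 - J.1| ≤ 1) : Intersects I J :=
  ⟨by linarith [(abs_sub_le_iff.1 h).1], by linarith [(abs_sub_le_iff.1 h).2]⟩

lemma Colorable.card_le {ω : ℕ} {s : List (ℝ × ℝ)} (hs : Colorable ω s) {S : Finset ℕ}
    (hS : S ⊆ range s.length)
    (hclique : (S : Set ℕ).Pairwise fun i j => Intersects (s.getD i 0) (s.getD j 0)) :
    #S ≤ ω := by
  obtain ⟨c, hc⟩ := hs
  let f : ℕ → ℕ := fun i => if h : i < s.length then c ⟨i, h⟩ else 0
  have hf : ∀ i (h : i < s.length), f i = c ⟨i, h⟩ := fun i h => dif_pos h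
  have hmaps : Set.MapsTo f S (range ω) := fun i hi => by
    simp [hf i (mem_range.1 (hS hi))]
  refine (card_le_card_of_injOn f hmaps fun i hi j hj hij => ?_).trans_eq (card_range ω)
  have hi' := mem_range.1 (hS hi)
  have hj' := mem_range.1 (hS hj)
  by_contra hne
  refine hc ⟨i, hi'⟩ ⟨j, hj'⟩ (by simpa using hne) ?_
    (Fin.ext (by simpa [hf, hi', hj'] using hij))
  have : Intersects (s.getD i 0) (s.getD j 0) := hclique hi hj hne
  rwa [List.getD_eq_getElem _ _ hi', List.getD_eq_getElem _ _ hj'] at this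

noncomputable section Algorithm

variable (σ : ℝ) (b : ℕ) (x : ℕ → ℝ)

def column (i : ℕ) : ℤ := ⌊(b : ℝ) * x i⌋

def cellStart (i : ℕ) : ℤ :=
  column b x i - (column b x i - prefixRank (column b x) i) % b

def cellRank (i : ℕ) : ℕ := prefixRank (cellStart b x) i

def period : ℕ := ⌈(b : ℝ) * (1 + σ)⌉₊

def color (i : ℕ) : ℕ := (cellStart b x i % period σ b).toNat + period σ b * cellRank b x i

def leftEnd (s : List (ℝ × ℝ)) (k : ℕ) : ℝ := (s.getD k 0).1

def intervalColoring (s : List (ℝ × ℝ)) : ℕ := color σ b (leftEnd s) (s.length - 1)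

end Algorithm

section Properties

variable {σ : ℝ} {b : ℕ} {x : ℕ → ℝ}

lemma cellStart_le_column (hb : 0 < b) (i : ℕ) : cellStart b x i ≤ column b x i := by
  have := Int.emod_nonneg (column b x i - prefixRank (column b x) i) (by omega : (b : ℤ) ≠ 0)
  rw [cellStart]
  omega

lemma column_lt_cellStart_add (hb : 0 < b) (i : ℕ) : column b x i < cellStart b x i + b := by
  have := Int.emod_lt_of_pos (column b x i - prefixRank (column b x) i) (by omega : (0 : ℤ) < b)
  rw [cellStart]
  omega

lemma cellStart_modEq (i : ℕ) : cellStart b x i ≡ prefixRank (column b x) i [ZMOD b] := by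
  have := (Int.mod_modEq (column b x i - prefixRank (column b x) i) b).sub_left (column b x i)
  rwa [sub_sub_cancel] at this

lemma cellStart_congr {y : ℕ → ℝ} {i : ℕ} (h : ∀ k ≤ i, x k = y k) :
    cellStart b x i = cellStart b y i := by
  have hcol : ∀ k ≤ i, column b x k = column b y k :=
    fun k hk => by rw [column, column, h k hk]
  rw [cellStart, cellStart, hcol i le_rfl, prefixRank_congr hcol]

lemma color_congr {y : ℕ → ℝ} {i : ℕ} (h : ∀ k ≤ i, x k = y k) :
    color σ b x i = color σ b y i := by
  have hcell : ∀ k ≤ i, cellStart b x k = cellStart b y k :=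
    fun k hk => cellStart_congr fun l hl => h l (hl.trans hk)
  rw [color, color, cellRank, cellRank, hcell i le_rfl, prefixRank_congr hcell]

lemma period_pos (hb : 0 < b) (hσ : 0 ≤ σ) : 0 < period σ b :=
  Nat.ceil_pos.2 (by positivity)

lemma natCast_period (hσ : 0 ≤ σ) : (period σ b : ℤ) = ⌈(b : ℝ) * σ⌉ + b := by
  rw [period, Int.natCast_ceil_eq_ceil (by positivity), mul_one_add, add_comm,
    Int.ceil_add_natCast, add_comm]

lemma column_sub_column_le {i j : ℕ} (h : x i - x j ≤ σ) :
    column b x i - column b x j ≤ ⌈(b : ℝ) * σ⌉ := by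
  rw [Int.le_ceil_iff, column, column]
  push_cast
  have hi := Int.floor_le ((b : ℝ) * x i)
  have hj := Int.lt_floor_add_one ((b : ℝ) * x j)
  have hx : (b : ℝ) * x i - b * x j ≤ b * σ := by
    rw [← mul_sub]
    exact mul_le_mul_of_nonneg_left h b.cast_nonneg
  linarith

lemma cellStart_sub_cellStart_lt (hb : 0 < b) {i j : ℕ} (h : |x i - x j| ≤ σ) :
    cellStart b x i - cellStart b x j < period σ b := by
  have := column_sub_column_le (b := b) (abs_sub_le_iff.1 h).1
  have := cellStart_le_column (x := x) hb i
  have := column_lt_cellStart_add (x := x) hb j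
  rw [natCast_period ((abs_nonneg _).trans h)]
  omega

lemma color_ne_color (hb : 0 < b) {i j : ℕ} (hij : i < j) (h : |x i - x j| ≤ σ) :
    color σ b x i ≠ color σ b x j := by
  intro heq
  set M := period σ b
  have hM : 0 < M := period_pos hb ((abs_nonneg _).trans h)
  have hres : ∀ k, (cellStart b x k % M).toNat < M := fun k => by
    have := Int.emod_lt_of_pos (cellStart b x k) (by omega : (0 : ℤ) < M)
    omega
  have hdecode : ∀ k, color σ b x k / M = cellRank b x k ∧
      color σ b x k % M = (cellStart b x k % M).toNat :=
    fun k => (Nat.div_mod_unique hM).2 ⟨rfl, hres k⟩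
  have hrank : cellRank b x i = cellRank b x j := by
    rw [← (hdecode i).1, ← (hdecode j).1, heq]
  have hmod : cellStart b x i ≡ cellStart b x j [ZMOD M] := by
    have : (cellStart b x i % M).toNat = (cellStart b x j % M).toNat := by
      rw [← (hdecode i).2, ← (hdecode j).2, heq]
    have := Int.emod_nonneg (cellStart b x i) (by omega : (M : ℤ) ≠ 0)
    have := Int.emod_nonneg (cellStart b x j) (by omega : (M : ℤ) ≠ 0)
    unfold Int.ModEq
    omega
  have hcell : cellStart b x i = cellStart b x j := by
    have hlt : |cellStart b x j - cellStart b x i| < M := abs_sub_lt_iff.2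
      ⟨cellStart_sub_cellStart_lt hb (abs_sub_comm (x i) (x j) ▸ h),
        cellStart_sub_cellStart_lt hb h⟩
    linarith [Int.eq_zero_of_abs_lt_dvd hmod.dvd hlt]
  exact (prefixRank_lt_prefixRank hij hcell).ne hrank

end Properties

section Counting

variable {σ : ℝ} {b : ℕ} {x : ℕ → ℝ}

lemma abs_sub_lt_one_of_column_mem_Ico (hb : 0 < b) {c : ℤ} {i j : ℕ}
    (hi : column b x i ∈ Ico c (c + b)) (hj : column b x j ∈ Ico c (c + b)) :
    |x i - x j| < 1 := by
  have hb' : (0 : ℝ) < b := by exact_mod_cast hb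
  have hscaled : ∀ k, column b x k ∈ Ico c (c + b) → c ≤ (b : ℝ) * x k ∧ (b : ℝ) * x k < c + b :=
    fun k hk => by
      obtain ⟨hlo, hhi⟩ := mem_Ico.1 hk
      have hlo' : (c : ℝ) ≤ column b x k := by exact_mod_cast hlo
      have hhi' : (column b x k : ℝ) + 1 ≤ c + b := by exact_mod_cast hhi
      exact ⟨hlo'.trans (Int.floor_le _), (Int.lt_floor_add_one _).trans_le hhi'⟩
  have hlt : |(b : ℝ) * x i - b * x j| < b := abs_sub_lt_iff.2
    ⟨by linarith [hscaled i hi, hscaled j hj], by linarith [hscaled i hi, hscaled j hj]⟩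
  rw [← mul_sub, abs_mul, Nat.abs_cast] at hlt
  exact (mul_lt_iff_lt_one_right hb').1 hlt

lemma mul_card_cell_le (hb : 0 < b) {n ω : ℕ}
    (hwindow : ∀ c : ℤ, #{k ∈ range n | column b x k ∈ Ico c (c + b)} ≤ ω) (c : ℤ) :
    b * #{k ∈ range n | cellStart b x k = c} ≤ ω + b * (b - 1) := by
  set cell := {k ∈ range n | cellStart b x k = c}
  have hmaps : Set.MapsTo (column b x) cell (Ico c (c + b)) := fun k hk => by
    obtain ⟨-, rfl⟩ := mem_filter.1 hk
    exact mem_Ico.2 ⟨cellStart_le_column hb k, column_lt_cellStart_add hb k⟩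
  have hfiber : ∀ p ∈ Ico c (c + b), b * #{k ∈ cell | column b x k = p} ≤
      #{k ∈ range n | column b x k = p} + (b - 1) := by
    intro p _
    have hrank : ∀ k ∈ {k ∈ cell | column b x k = p},
        (prefixRank (column b x) k : ℤ) ≡ c [ZMOD b] :=
      fun k hk => (cellStart_modEq k).symm.trans (by rw [(mem_filter.1 (mem_filter.1 hk).1).2])
    refine mul_card_le_of_modEq hb
      ((prefixRank_injOn _ p).mono fun k hk => (mem_filter.1 hk).2) (fun k hk => ?_)
      fun k hk l hl => Int.natCast_modEq_iff.1 ((hrank k hk).trans (hrank l hl).symm)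
    obtain ⟨hk', rfl⟩ := mem_filter.1 hk
    exact prefixRank_lt_card (mem_range.1 (mem_filter.1 hk').1)
  calc b * #cell = ∑ p ∈ Ico c (c + b), b * #{k ∈ cell | column b x k = p} := by
        rw [card_eq_sum_card_fiberwise hmaps, mul_sum]
    _ ≤ ∑ p ∈ Ico c (c + b), (#{k ∈ range n | column b x k = p} + (b - 1)) := sum_le_sum hfiber
    _ = #{k ∈ range n | column b x k ∈ Ico c (c + b)} + b * (b - 1) := by
        rw [sum_add_distrib, sum_card_fiberwise_eq_card_filter, sum_const, Int.card_Ico,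
          add_sub_cancel_left, Int.toNat_natCast, smul_eq_mul]
    _ ≤ ω + b * (b - 1) := Nat.add_le_add_right (hwindow c) _

lemma color_lt (hb : 0 < b) (hσ : 0 ≤ σ) {n ω : ℕ}
    (hwindow : ∀ c : ℤ, #{k ∈ range n | column b x k ∈ Ico c (c + b)} ≤ ω) {i : ℕ}
    (hi : i < n) :
    color σ b x i < period σ b * ((ω + b * (b - 1)) / b) := by
  have hM : 0 < period σ b := period_pos hb hσ
  have hres : (cellStart b x i % period σ b).toNat < period σ b := by
    have := Int.emod_lt_of_pos (cellStart b x i) (by omega : (0 : ℤ) < period σ b)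
    omega
  have hrank : cellRank b x i + 1 ≤ (ω + b * (b - 1)) / b := by
    rw [Nat.le_div_iff_mul_le hb, mul_comm]
    exact (Nat.mul_le_mul_left b (prefixRank_lt_card hi)).trans (mul_card_cell_le hb hwindow _)
  calc color σ b x i < period σ b * (cellRank b x i + 1) := by
        rw [color, mul_add_one]
        omega
    _ ≤ period σ b * ((ω + b * (b - 1)) / b) := Nat.mul_le_mul_left _ hrank

end Counting

section Intervals

variable {σ : ℝ} {b : ℕ} {s : List (ℝ × ℝ)}

lemma intervalColoring_take {i : ℕ} (hi : i < s.length) :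
    intervalColoring σ b (s.take (i + 1)) = color σ b (leftEnd s) i := by
  rw [intervalColoring, List.length_take, show min (i + 1) s.length - 1 = i by omega]
  exact color_congr fun k hk => by simp [leftEnd, Nat.lt_succ_of_le hk]

lemma properAlg_intervalColoring (hb : 0 < b) : ProperAlg σ (intervalColoring σ b) := by
  intro s hs i j hij hint
  rw [intervalColoring_take i.isLt, intervalColoring_take j.isLt]
  refine color_ne_color hb hij ?_
  simpa only [leftEnd, List.get_eq_getElem, List.getD_eq_getElem _ _ i.isLt,
    List.getD_eq_getElem _ _ j.isLt] using
    hint.abs_fst_sub_le (hs _ (s.get_mem i)).2 (hs _ (s.get_mem j)).2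

lemma card_window_le (hb : 0 < b) (hs : LengthsIn σ s) {ω : ℕ} (hcol : Colorable ω s)
    (c : ℤ) :
    #{k ∈ range s.length | column b (leftEnd s) k ∈ Ico c (c + b)} ≤ ω := by
  refine hcol.card_le (filter_subset _ _) fun i hi j hj _ => ?_
  obtain ⟨hi, hci⟩ := mem_filter.1 hi
  obtain ⟨hj, hcj⟩ := mem_filter.1 hj
  have hlen : ∀ k ∈ range s.length, 1 ≤ (s.getD k 0).2 - (s.getD k 0).1 := fun k hk => by
    rw [List.getD_eq_getElem _ _ (mem_range.1 hk)]
    exact (hs _ (List.getElem_mem _)).1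
  exact intersects_of_abs_fst_sub_le_one (hlen i hi) (hlen j hj)
    (abs_sub_lt_one_of_column_mem_Ico hb hci hcj).le

lemma colorsUsed_intervalColoring_le (hb : 0 < b) (hσ : 0 ≤ σ) (hs : LengthsIn σ s) {ω : ℕ}
    (hcol : Colorable ω s) :
    colorsUsed (intervalColoring σ b) s ≤ period σ b * ((ω + b * (b - 1)) / b) := by
  refine (card_le_card fun c hc => ?_).trans (card_range _).le
  obtain ⟨i, hi, rfl⟩ := mem_image.1 hc
  rw [mem_range] at hi ⊢
  rw [intervalColoring_take hi]
  exact color_lt hb hσ (card_window_le hb hs hcol) hi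

end Intervals

lemma natCast_add_mul_pred_div_le {b : ℕ} (hb : 0 < b) (ω : ℕ) :
    (((ω + b * (b - 1)) / b : ℕ) : ℝ) ≤ ω / b + b - 1 := by
  have hb' : (b : ℝ) ≠ 0 := by positivity
  refine Nat.cast_div_le.trans_eq ?_
  push_cast [Nat.cast_sub hb]
  field_simp
  ring

theorem stmt_0 (σ : ℝ) (hσ : 1 ≤ σ) (b : ℕ) (hb : 0 < b) :
    ∃ A : List (ℝ × ℝ) → ℕ, ProperAlg σ A ∧
      ∀ ω : ℕ, 0 < ω → ∀ s : List (ℝ × ℝ), LengthsIn σ s → Colorable ω s →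
        (colorsUsed A s : ℝ) ≤
          (⌈(b : ℝ) * (1 + σ)⌉ : ℝ) * ((ω : ℝ) / (b : ℝ) + (b : ℝ) - 1) := by
  refine ⟨intervalColoring σ b, properAlg_intervalColoring hb, fun ω _ s hs hcol => ?_⟩
  have hσ₀ : 0 ≤ σ := by linarith
  have hperiod : (period σ b : ℝ) = (⌈(b : ℝ) * (1 + σ)⌉ : ℝ) := by
    rw [period, ← Int.natCast_ceil_eq_ceil (by positivity), Int.cast_natCast]
  calc (colorsUsed (intervalColoring σ b) s : ℝ)
      ≤ (period σ b : ℝ) * (((ω + b * (b - 1)) / b : ℕ) : ℝ) := by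
        exact_mod_cast colorsUsed_intervalColoring_le hb hσ₀ hs hcol
    _ ≤ (⌈(b : ℝ) * (1 + σ)⌉ : ℝ) * ((ω : ℝ) / (b : ℝ) + (b : ℝ) - 1) := by
        rw [← hperiod]
        exact mul_le_mul_of_nonneg_left (natCast_add_mul_pred_div_le hb ω) (Nat.cast_nonneg _)
end

section
/- For every function f : ℝ → ℝ there is no online interval coloring algorithm A that is a proper online algorithm for σ-interval coloring for every σ ≥ 1 and satisfies: for every σ ≥ 1, every positive integer ω, and every ω-colorable finite sequence of closed intervals with lengths in [1,σ], A uses at most 1.618·ω + f(σ) colors on the sequence. -/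
/-! The adversary works in rounds. Before round `n` it has presented a `2ⁿ⁺¹K`-colorable
sequence `s` inside `[-n, 1 + 10n]`. With `b = 2ⁿK`, round `n` presents to the right of `s` a
`2b`-colorable gadget on which `A` must spend `5b/2` colors, then `2b` copies of an interval
covering the gadget but missing `s`, then `2b` copies of one covering `s` and meeting the first
block but missing the gadget. The first block avoids the colors of the gadget, the second those
of `s` and of the first block; as `A` used at most `2ρb + C` colors on `s` followed by the
gadget, the round adds `(6.5 - 2ρ)b - C` colors while only doubling the clique size. Starting
from `2K` copies of `[0, 1]`, six rounds with `ρ = 1.618` beat `ρ 2⁷K + C` once `K` is large.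

The gadget starts with `b` copies each of two disjoint unit intervals. If at most `b/2` colors
appear on both blocks, `b` copies of a bridge over both add `b` fresh colors; otherwise two
blocks of `b` intervals, meeting each other and one unit interval each, bring the total to `2b`
plus the number of shared colors. -/

def Within (a b : ℝ) (s : List (ℝ × ℝ)) : Prop := ∀ I ∈ s, a ≤ I.1 ∧ I.2 ≤ b

def Separated (s t : List (ℝ × ℝ)) : Prop := ∀ I ∈ s, ∀ J ∈ t, ¬ Intersects I J

def ProperlyColored {ω : ℕ} (l : List ((ℝ × ℝ) × Fin ω)) : Prop :=
  l.Pairwise fun x y => Intersects x.1 y.1 → x.2 ≠ y.2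

section Intervals

variable {σ a b c d : ℝ} {I J : ℝ × ℝ} {s t : List (ℝ × ℝ)}

theorem Intersects.symm (h : Intersects I J) : Intersects J I := ⟨h.2, h.1⟩

theorem Separated.symm (h : Separated s t) : Separated t s :=
  fun J hJ I hI hJI => h I hI J hJ hJI.symm

theorem separated_of_within (hs : Within a b s) (ht : Within c d t) (hbc : b < c) :
    Separated s t :=
  fun I hI J hJ h => by linarith [h.2, (hs I hI).2, (ht J hJ).1]

theorem separated_replicate (h : ¬ Intersects I J) (m n : ℕ) :
    Separated (List.replicate m I) (List.replicate n J) := by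
  intro I' hI' J' hJ'
  rwa [List.eq_of_mem_replicate hI', List.eq_of_mem_replicate hJ']

theorem intersects_replicate (h : Intersects I J) (m n : ℕ) :
    ∀ I' ∈ List.replicate m I, ∀ J' ∈ List.replicate n J, Intersects I' J' := by
  intro I' hI' J' hJ'
  rwa [List.eq_of_mem_replicate hI', List.eq_of_mem_replicate hJ']

theorem intersects_of_within (hs : Within a b s) (hl : LengthsIn σ s) (ha : J.1 ≤ a)
    (hb : b ≤ J.2) : ∀ I ∈ s, Intersects I J :=
  fun I hI => ⟨by linarith [hs I hI, hl I hI], by linarith [hs I hI, hl I hI]⟩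

theorem lengthsIn_append : LengthsIn σ (s ++ t) ↔ LengthsIn σ s ∧ LengthsIn σ t :=
  List.forall_mem_append

theorem lengthsIn_replicate (hI : 1 ≤ I.2 - I.1 ∧ I.2 - I.1 ≤ σ) (n : ℕ) :
    LengthsIn σ (List.replicate n I) := by
  intro J hJ
  rwa [List.eq_of_mem_replicate hJ]

theorem Within.mono {a' b' : ℝ} (hs : Within a b s) (ha : a' ≤ a) (hb : b ≤ b') :
    Within a' b' s :=
  fun I hI => ⟨ha.trans (hs I hI).1, (hs I hI).2.trans hb⟩

theorem within_append : Within a b (s ++ t) ↔ Within a b s ∧ Within a b t :=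
  List.forall_mem_append

theorem within_replicate (ha : a ≤ I.1) (hb : I.2 ≤ b) (n : ℕ) :
    Within a b (List.replicate n I) := by
  intro J hJ
  rw [List.eq_of_mem_replicate hJ]
  exact ⟨ha, hb⟩

end Intervals

section Colorings

variable {ω ω₁ ω₂ : ℕ} {s t : List (ℝ × ℝ)}

theorem colorable_iff :
    Colorable ω s ↔ ∃ l : List ((ℝ × ℝ) × Fin ω), l.map Prod.fst = s ∧ ProperlyColored l := by
  constructor
  · rintro ⟨c, hc⟩
    refine ⟨List.ofFn fun i => (s.get i, c i), List.map_ofFn.trans (List.ofFn_get s), ?_⟩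
    exact List.pairwise_ofFn.2 fun i j hij => hc i j hij.ne
  · rintro ⟨l, rfl, hl⟩
    refine ⟨fun i => (l[i]'(by simpa using i.2)).2, fun i j hij hI => ?_⟩
    rcases Fin.lt_or_lt_of_ne hij with h | h
    · exact List.pairwise_iff_getElem.1 hl i j _ _ h (by simpa using hI)
    · exact (List.pairwise_iff_getElem.1 hl j i _ _ h (by simpa using hI.symm)).symm

theorem Colorable.append (hs : Colorable ω₁ s) (ht : Colorable ω₂ t) :
    Colorable (ω₁ + ω₂) (s ++ t) := by
  obtain ⟨l₁, rfl, h₁⟩ := colorable_iff.1 hs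
  obtain ⟨l₂, rfl, h₂⟩ := colorable_iff.1 ht
  refine colorable_iff.2 ⟨l₁.map (fun x => (x.1, Fin.castAdd ω₂ x.2)) ++
    l₂.map (fun x => (x.1, Fin.natAdd ω₁ x.2)), by simp [Function.comp_def], ?_⟩
  refine List.pairwise_append.2 ⟨List.pairwise_map.2 ?_, List.pairwise_map.2 ?_, ?_⟩
  · exact h₁.imp fun h hI heq => h hI (Fin.castAdd_inj.1 heq)
  · exact h₂.imp fun h hI heq => h hI ((Fin.natAdd_inj _).1 heq)
  · simp only [List.mem_map]
    rintro _ ⟨x, -, rfl⟩ _ ⟨y, -, rfl⟩ - heq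
    have := congrArg Fin.val heq
    simp only [Fin.val_castAdd, Fin.val_natAdd] at this
    omega

theorem Colorable.append_of_separated (hs : Colorable ω s) (ht : Colorable ω t)
    (hst : Separated s t) : Colorable ω (s ++ t) := by
  obtain ⟨l₁, rfl, h₁⟩ := colorable_iff.1 hs
  obtain ⟨l₂, rfl, h₂⟩ := colorable_iff.1 ht
  refine colorable_iff.2 ⟨l₁ ++ l₂, List.map_append, List.pairwise_append.2 ⟨h₁, h₂, ?_⟩⟩
  exact fun x hx y hy hxy =>
    absurd hxy (hst x.1 (List.mem_map_of_mem hx) y.1 (List.mem_map_of_mem hy))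

theorem Colorable.perm (hs : Colorable ω s) (hst : s.Perm t) : Colorable ω t := by
  obtain ⟨l, rfl, hl⟩ := colorable_iff.1 hs
  obtain ⟨l', rfl, hl'⟩ : ∃ l' : List ((ℝ × ℝ) × Fin ω), t = l'.map Prod.fst ∧ l'.Perm l :=
    (congrFun₂ (List.eq_map_comp_perm Prod.fst) t l).mpr hst.symm
  exact colorable_iff.2 ⟨l', rfl, hl.perm hl'.symm fun h hI heq => h hI.symm heq.symm⟩

theorem colorable_replicate (n : ℕ) (I : ℝ × ℝ) : Colorable n (List.replicate n I) := by
  refine colorable_iff.2 ⟨(List.finRange n).map fun i => (I, i), by simp, ?_⟩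
  exact List.pairwise_map.2 ((List.nodup_finRange n).imp fun hne _ => by simpa using hne)

theorem Colorable.interleave {s₁ t₁ s₂ t₂ : List (ℝ × ℝ)} (h₁ : Colorable ω₁ (s₁ ++ t₁))
    (h₂ : Colorable ω₂ (s₂ ++ t₂)) : Colorable (ω₁ + ω₂) (s₁ ++ s₂ ++ t₁ ++ t₂) :=
  (h₁.append h₂).perm (by
    simp only [List.append_assoc]
    exact (List.perm_append_comm_assoc _ _ _).append_left s₁)

end Colorings

section Palettes

variable (A : List (ℝ × ℝ) → ℕ) (s t : List (ℝ × ℝ))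

def palette : Finset ℕ := (Finset.range s.length).image fun i => A (s.take (i + 1))

theorem colorsUsed_eq_card_palette : colorsUsed A s = (palette A s).card := rfl

/-- `A` once `s` has been presented, so that `palette (after A s) t` is the set of colors of
the members of `t` in the sequence `s ++ t`. -/
def after : List (ℝ × ℝ) → ℕ := fun u => A (s ++ u)

theorem after_append : after A (s ++ t) = after (after A s) t :=
  funext fun _ => by simp [after]

theorem palette_append : palette A (s ++ t) = palette A s ∪ palette (after A s) t := by
  simp only [palette, List.length_append, Finset.range_add, Finset.image_union,
    Finset.map_eq_image, Finset.image_image]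
  congr 1
  · refine Finset.image_congr fun i hi => ?_
    rw [Finset.mem_coe, Finset.mem_range] at hi
    simp only [List.take_append_of_le_length (Nat.succ_le_of_lt hi)]
  · refine Finset.image_congr fun i _ => ?_
    simp only [Function.comp_apply, addLeftEmbedding_apply, after, add_assoc]
    rw [List.take_length_add_append]

end Palettes

theorem Finset.card_add_card_add_card_add_card_le {α : Type*} [DecidableEq α]
    {M P T J : Finset α} (hTP : Disjoint T P) (hJM : Disjoint J M) (hJT : Disjoint J T) :
    T.card + J.card + P.card + M.card ≤ (M ∪ P ∪ T ∪ J).card + (M ∪ P).card := by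
  have hT := card_union_add_card_inter (M ∪ P) T
  have hJ := card_union_add_card_inter (M ∪ P ∪ T) J
  have hTP' : ((M ∪ P) ∩ T).card + P.card ≤ (M ∪ P).card := by
    rw [← card_union_of_disjoint (disjoint_of_subset_left inter_subset_right hTP)]
    exact card_le_card (union_subset inter_subset_left subset_union_right)
  have hJM' : ((M ∪ P ∪ T) ∩ J).card + M.card ≤ (M ∪ P).card := by
    rw [← card_union_of_disjoint (disjoint_of_subset_left inter_subset_right hJM)]
    refine card_le_card (union_subset (fun x hx => ?_) subset_union_left)
    rw [mem_inter, mem_union] at hx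
    exact hx.1.resolve_right (disjoint_left.1 hJT hx.2)
  omega

section ProperAlg

variable {σ : ℝ} {A : List (ℝ × ℝ) → ℕ}

theorem ProperAlg.ne_of_intersects (hA : ProperAlg σ A) {s : List (ℝ × ℝ)}
    (hs : LengthsIn σ s) {i j : ℕ} (hi : i < s.length) (hj : j < s.length) (hij : i ≠ j)
    (h : Intersects s[i] s[j]) : A (s.take (i + 1)) ≠ A (s.take (j + 1)) := by
  rcases Nat.lt_or_gt_of_ne hij with hlt | hlt
  · exact hA s hs ⟨i, hi⟩ ⟨j, hj⟩ hlt h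
  · exact (hA s hs ⟨j, hj⟩ ⟨i, hi⟩ hlt h.symm).symm

theorem properAlg_after (hA : ProperAlg σ A) {s : List (ℝ × ℝ)} (hs : LengthsIn σ s) :
    ProperAlg σ (after A s) := by
  intro t ht i j hij h
  have := hA.ne_of_intersects (lengthsIn_append.2 ⟨hs, ht⟩) (i := s.length + i)
    (j := s.length + j) (by simp) (by simp) (by have := Fin.lt_def.1 hij; omega)
    (by simpa [List.getElem_append_right] using h)
  simpa [after, add_assoc, List.take_length_add_append] using this

theorem ProperAlg.card_palette_of_pairwise (hA : ProperAlg σ A) {s : List (ℝ × ℝ)}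
    (hs : LengthsIn σ s) (hclique : s.Pairwise Intersects) : (palette A s).card = s.length := by
  rw [palette, Finset.card_image_of_injOn, Finset.card_range]
  intro i hi j hj heq
  by_contra hij
  rw [Finset.mem_coe, Finset.mem_range] at hi hj
  have hI : Intersects s[i] s[j] := by
    rcases Nat.lt_or_gt_of_ne hij with hlt | hlt
    · exact List.pairwise_iff_getElem.1 hclique i j hi hj hlt
    · exact (List.pairwise_iff_getElem.1 hclique j i hj hi hlt).symm
  exact hA.ne_of_intersects hs hi hj hij hI heq

theorem ProperAlg.card_palette_replicate (hA : ProperAlg σ A) {I : ℝ × ℝ}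
    (hI : 1 ≤ I.2 - I.1 ∧ I.2 - I.1 ≤ σ) (n : ℕ) :
    (palette A (List.replicate n I)).card = n := by
  rw [hA.card_palette_of_pairwise (lengthsIn_replicate hI n), List.length_replicate]
  exact List.pairwise_replicate.2 (Or.inr ⟨by linarith, by linarith⟩)

theorem ProperAlg.disjoint_palette (hA : ProperAlg σ A) {u w t : List (ℝ × ℝ)} (huw : u <+: w)
    (hl : LengthsIn σ (w ++ t)) (h : ∀ I ∈ u, ∀ J ∈ t, Intersects I J) :
    Disjoint (palette A u) (palette (after A w) t) := by
  obtain ⟨v, rfl⟩ := huw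
  simp only [Finset.disjoint_left, palette, Finset.mem_image, Finset.mem_range]
  rintro _ ⟨i, hi, rfl⟩ ⟨j, hj, heq⟩
  have := hA.ne_of_intersects hl (i := i) (j := (u ++ v).length + j) (by simp; omega)
    (by simp; omega) (by simp; omega) (by
      rw [List.getElem_append_left (by simp; omega), List.getElem_append_left (by omega),
        List.getElem_append_right (by simp)]
      exact h _ (List.getElem_mem _) _ (by simp))
  refine this ?_
  rw [List.take_append_of_le_length (by simp; omega), List.take_append_of_le_length (by omega),
    add_assoc, List.take_length_add_append]
  exact heq.symm

theorem ProperAlg.colorsUsed_append_replicate (hA : ProperAlg σ A) {u : List (ℝ × ℝ)}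
    (hu : LengthsIn σ u) {K : ℝ × ℝ} (hK : 1 ≤ K.2 - K.1 ∧ K.2 - K.1 ≤ σ)
    (h : ∀ I ∈ u, Intersects I K) (n : ℕ) :
    colorsUsed A (u ++ List.replicate n K) = colorsUsed A u + n := by
  have hdisj := hA.disjoint_palette (List.prefix_refl u)
    (lengthsIn_append.2 ⟨hu, lengthsIn_replicate hK n⟩)
    (fun I hI J hJ => List.eq_of_mem_replicate hJ ▸ h I hI)
  rw [colorsUsed_eq_card_palette, palette_append, Finset.card_union_of_disjoint hdisj,
    (properAlg_after hA hu).card_palette_replicate hK, colorsUsed_eq_card_palette]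

theorem ProperAlg.le_colorsUsed_of_covers (hA : ProperAlg σ A) {s q : List (ℝ × ℝ)}
    {T J : ℝ × ℝ} (hl : LengthsIn σ (s ++ q)) (hT : 1 ≤ T.2 - T.1 ∧ T.2 - T.1 ≤ σ)
    (hJ : 1 ≤ J.2 - J.1 ∧ J.2 - J.1 ≤ σ) (hqT : ∀ I ∈ q, Intersects I T)
    (hsJ : ∀ I ∈ s, Intersects I J) (hTJ : Intersects T J) (n : ℕ) :
    n + n + colorsUsed (after A s) q + colorsUsed A s ≤
      colorsUsed A (s ++ q ++ List.replicate n T ++ List.replicate n J) +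
        colorsUsed A (s ++ q) := by
  set Ts := List.replicate n T
  set Js := List.replicate n J
  have hlT : LengthsIn σ (s ++ q ++ Ts) := lengthsIn_append.2 ⟨hl, lengthsIn_replicate hT n⟩
  have hTq : Disjoint (palette (after A (s ++ q)) Ts) (palette (after A s) q) := by
    rw [after_append]
    refine ((properAlg_after hA (lengthsIn_append.1 hl).1).disjoint_palette
      (List.prefix_refl q) ?_ ?_).symm
    · exact lengthsIn_append.2 ⟨(lengthsIn_append.1 hl).2, lengthsIn_replicate hT n⟩
    · exact fun I hI _ hT' => List.eq_of_mem_replicate hT' ▸ hqT I hI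
  have hJs : Disjoint (palette (after A (s ++ q ++ Ts)) Js) (palette A s) := by
    refine (hA.disjoint_palette ((List.prefix_append _ _).trans (List.prefix_append _ _))
      (lengthsIn_append.2 ⟨hlT, lengthsIn_replicate hJ n⟩) ?_).symm
    exact fun I hI _ hJ' => List.eq_of_mem_replicate hJ' ▸ hsJ I hI
  have hJT : Disjoint (palette (after A (s ++ q ++ Ts)) Js) (palette (after A (s ++ q)) Ts) := by
    rw [after_append _ (s ++ q)]
    exact ((properAlg_after hA hl).disjoint_palette (List.prefix_refl Ts)
      (lengthsIn_append.2 ⟨lengthsIn_replicate hT n, lengthsIn_replicate hJ n⟩)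
      (intersects_replicate hTJ n n)).symm
  have hcount := Finset.card_add_card_add_card_add_card_le hTq hJs hJT
  rwa [(properAlg_after hA hl).card_palette_replicate hT,
    (properAlg_after hA hlT).card_palette_replicate hJ, ← palette_append, ← palette_append,
    ← palette_append] at hcount

theorem ProperAlg.le_colorsUsed_of_cross (hA : ProperAlg σ A) {X Y T J : ℝ × ℝ}
    (hX : 1 ≤ X.2 - X.1 ∧ X.2 - X.1 ≤ σ) (hY : 1 ≤ Y.2 - Y.1 ∧ Y.2 - Y.1 ≤ σ)
    (hT : 1 ≤ T.2 - T.1 ∧ T.2 - T.1 ≤ σ) (hJ : 1 ≤ J.2 - J.1 ∧ J.2 - J.1 ≤ σ)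
    (hYT : Intersects Y T) (hXJ : Intersects X J) (hTJ : Intersects T J) (b : ℕ) :
    2 * b + (palette A (List.replicate b X) ∩
        palette (after A (List.replicate b X)) (List.replicate b Y)).card ≤
      colorsUsed A (List.replicate b X ++ List.replicate b Y ++ List.replicate b T ++
        List.replicate b J) := by
  have hXs := lengthsIn_replicate hX b
  have hcover := hA.le_colorsUsed_of_covers (lengthsIn_append.2 ⟨hXs, lengthsIn_replicate hY b⟩)
    hT hJ (intersects_replicate hYT b 1 · · _ (List.mem_singleton_self T))
    (intersects_replicate hXJ b 1 · · _ (List.mem_singleton_self J)) hTJ b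
  have hoverlap := Finset.card_union_add_card_inter (palette A (List.replicate b X))
    (palette (after A (List.replicate b X)) (List.replicate b Y))
  rw [← palette_append] at hoverlap
  simp only [colorsUsed_eq_card_palette, hA.card_palette_replicate hX,
    (properAlg_after hA hXs).card_palette_replicate hY] at hcover hoverlap ⊢
  omega

theorem ProperAlg.exists_gadget (hA : ProperAlg σ A) (hσ : 7 ≤ σ) (c : ℝ) (b : ℕ) :
    ∃ q, LengthsIn σ q ∧ Within c (c + 7) q ∧ Colorable (2 * b) q ∧
      5 * b ≤ 2 * colorsUsed A q := by
  set Xs := List.replicate b (c + 1, c + 2)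
  set Ys := List.replicate b (c + 5, c + 6)
  have hl : LengthsIn σ
      [(c + 1, c + 2), (c + 5, c + 6), (c, c + 7), (c + 3, c + 7), (c, c + 4)] := by
    simp only [LengthsIn, List.mem_cons, List.not_mem_nil, or_false]
    rintro _ (rfl | rfl | rfl | rfl | rfl) <;> norm_num <;> linarith
  have hXs : LengthsIn σ Xs := lengthsIn_replicate (hl _ (by simp)) b
  have hXY : LengthsIn σ (Xs ++ Ys) :=
    lengthsIn_append.2 ⟨hXs, lengthsIn_replicate (hl _ (by simp)) b⟩
  have hoverlap := Finset.card_union_add_card_inter (palette A Xs) (palette (after A Xs) Ys)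
  rw [← palette_append, ← colorsUsed_eq_card_palette, hA.card_palette_replicate (hl _ (by simp)),
    (properAlg_after hA hXs).card_palette_replicate (hl _ (by simp))] at hoverlap
  rcases le_or_gt (2 * (palette A Xs ∩ palette (after A Xs) Ys).card) b with h | h
  · refine ⟨Xs ++ Ys ++ List.replicate b (c, c + 7), ?_, ?_, ?_, ?_⟩
    · exact lengthsIn_append.2 ⟨hXY, lengthsIn_replicate (hl _ (by simp)) b⟩
    · simp only [Xs, Ys, within_append]
      refine ⟨⟨?_, ?_⟩, ?_⟩ <;> apply within_replicate <;> norm_num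
    · rw [two_mul]
      refine Colorable.append ?_ (colorable_replicate b _)
      exact (colorable_replicate b _).append_of_separated (colorable_replicate b _)
        (separated_replicate (by norm_num [Intersects]) b b)
    · rw [hA.colorsUsed_append_replicate hXY (hl _ (by simp)) ?_ b]
      · omega
      · simp only [Xs, Ys, List.mem_append, List.mem_replicate]
        rintro _ (⟨-, rfl⟩ | ⟨-, rfl⟩) <;> norm_num [Intersects]
  · refine ⟨Xs ++ Ys ++ List.replicate b (c + 3, c + 7) ++ List.replicate b (c, c + 4),
      ?_, ?_, ?_, ?_⟩
    · simp only [Xs, Ys, lengthsIn_append]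
      refine ⟨⟨⟨?_, ?_⟩, ?_⟩, ?_⟩ <;> exact lengthsIn_replicate (hl _ (by simp)) b
    · simp only [Xs, Ys, within_append]
      refine ⟨⟨⟨?_, ?_⟩, ?_⟩, ?_⟩ <;> apply within_replicate <;> norm_num
    · rw [two_mul]
      refine Colorable.interleave ?_ ?_ <;>
        refine (colorable_replicate b _).append_of_separated (colorable_replicate b _) ?_
      · exact separated_replicate (by norm_num [Intersects]) b b
      · exact (separated_replicate (by norm_num [Intersects]) b b).symm
    · have : 2 * b + (palette A Xs ∩ palette (after A Xs) Ys).card ≤ colorsUsed A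
          (Xs ++ Ys ++ List.replicate b (c + 3, c + 7) ++ List.replicate b (c, c + 4)) :=
        hA.le_colorsUsed_of_cross (hl _ (by simp)) (hl _ (by simp)) (hl _ (by simp))
          (hl _ (by simp)) (by norm_num [Intersects]) (by norm_num [Intersects])
          (by norm_num [Intersects]) b
      omega

theorem ProperAlg.exists_step (hA : ProperAlg σ A) (hσ : 9 ≤ σ) {a R ρ C : ℝ} (haR : a ≤ R)
    (hσR : R - a + 2 ≤ σ) {b : ℕ}
    (hub : ∀ t, LengthsIn σ t → Colorable (2 * b) t → (colorsUsed A t : ℝ) ≤ ρ * (2 * b) + C)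
    {s : List (ℝ × ℝ)} (hs : LengthsIn σ s) (hsw : Within a R s) (hcol : Colorable (2 * b) s) :
    ∃ s', LengthsIn σ s' ∧ Within (a - 1) (R + 10) s' ∧ Colorable (2 * (2 * b)) s' ∧
      (colorsUsed A s : ℝ) + (6.5 - 2 * ρ) * b - C ≤ colorsUsed A s' := by
  obtain ⟨q, hql, hqw, hqcol, hqc⟩ :=
    (properAlg_after hA hs).exists_gadget (by linarith) (R + 2) b
  have hT : 1 ≤ (R + 10) - (R + 1) ∧ (R + 10) - (R + 1) ≤ σ := by constructor <;> linarith
  have hJ : 1 ≤ (R + 1) - (a - 1) ∧ (R + 1) - (a - 1) ≤ σ := by constructor <;> linarith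
  set Ts := List.replicate (2 * b) (R + 1, R + 10)
  set Js := List.replicate (2 * b) (a - 1, R + 1)
  have hTw : Within (R + 1) (R + 10) Ts := within_replicate le_rfl le_rfl _
  have hJw : Within (a - 1) (R + 1) Js := within_replicate le_rfl le_rfl _
  have hsq : LengthsIn σ (s ++ q) := lengthsIn_append.2 ⟨hs, hql⟩
  have hcount := hA.le_colorsUsed_of_covers (T := (R + 1, R + 10)) (J := (a - 1, R + 1))
    hsq hT hJ (intersects_of_within hqw hql (by linarith) (by linarith))
    (intersects_of_within hsw hs (by linarith) (by linarith)) ⟨by linarith, by linarith⟩ (2 * b)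
  refine ⟨s ++ q ++ Ts ++ Js, ?_, ?_, ?_, ?_⟩
  · exact lengthsIn_append.2 ⟨lengthsIn_append.2 ⟨hsq, lengthsIn_replicate hT _⟩,
      lengthsIn_replicate hJ _⟩
  · simp only [within_append]
    exact ⟨⟨⟨hsw.mono (by linarith) (by linarith), hqw.mono (by linarith) (by linarith)⟩,
      hTw.mono (by linarith) le_rfl⟩, hJw.mono le_rfl (by linarith)⟩
  · rw [two_mul (2 * b)]
    refine Colorable.interleave ?_ ?_
    · exact hcol.append_of_separated (colorable_replicate _ _)
        (separated_of_within hsw hTw (by linarith))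
    · exact hqcol.append_of_separated (colorable_replicate _ _)
        (separated_of_within hJw hqw (by linarith)).symm
  · have hsq_bound := hub _ hsq
      (hcol.append_of_separated hqcol (separated_of_within hsw hqw (by linarith)))
    have hqc' : (5 * b : ℝ) ≤ 2 * colorsUsed (after A s) q := by exact_mod_cast hqc
    have hcount' : ((2 * b + 2 * b + colorsUsed (after A s) q + colorsUsed A s : ℕ) : ℝ) ≤
        ((colorsUsed A (s ++ q ++ Ts ++ Js) + colorsUsed A (s ++ q) : ℕ) : ℝ) := by
      exact_mod_cast hcount
    push_cast at hcount'
    linarith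

theorem ProperAlg.exists_forcing_sequence (hA : ProperAlg σ A) {ρ C : ℝ}
    (hub : ∀ ω : ℕ, 0 < ω → ∀ t, LengthsIn σ t → Colorable ω t →
      (colorsUsed A t : ℝ) ≤ ρ * ω + C)
    {K : ℕ} (hK : 0 < K) (n : ℕ) (hσ : 11 * n + 9 ≤ σ) :
    ∃ s, LengthsIn σ s ∧ Within (-n) (1 + 10 * n) s ∧ Colorable (2 ^ (n + 1) * K) s ∧
      2 * K + (6.5 - 2 * ρ) * (2 ^ n - 1) * K - n * C ≤ colorsUsed A s := by
  induction n with
  | zero =>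
    have hI : 1 ≤ (1 : ℝ) - 0 ∧ (1 : ℝ) - 0 ≤ σ := by constructor <;> linarith
    refine ⟨List.replicate (2 * K) (0, 1), lengthsIn_replicate hI _,
      by simpa using within_replicate le_rfl le_rfl _, by simpa using colorable_replicate _ _, ?_⟩
    rw [colorsUsed_eq_card_palette, hA.card_palette_replicate hI]
    norm_num
  | succ n ih =>
    push_cast at hσ
    obtain ⟨s, hs, hsw, hcol, hforced⟩ := ih (by linarith)
    have hω : 2 ^ (n + 1) * K = 2 * (2 ^ n * K) := by ring
    obtain ⟨s', hs', hsw', hcol', hstep⟩ := hA.exists_step (by linarith) (by linarith)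
      (by linarith) (fun t ht htc => by exact_mod_cast hub _ (by positivity) t ht htc)
      hs hsw (hω ▸ hcol)
    refine ⟨s', hs', ?_, ?_, ?_⟩
    · convert hsw' using 1 <;> push_cast <;> ring
    · convert hcol' using 1
      ring
    · have hgain : (6.5 - 2 * ρ) * (2 ^ (n + 1) - 1) * K =
          (6.5 - 2 * ρ) * (2 ^ n - 1) * K + (6.5 - 2 * ρ) * (2 ^ n * K) := by ring
      push_cast at hstep ⊢
      linarith

end ProperAlg

theorem stmt_6 (f : ℝ → ℝ) :
    ¬ ∃ A : List (ℝ × ℝ) → ℕ, (∀ σ : ℝ, 1 ≤ σ → ProperAlg σ A) ∧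
      ∀ σ : ℝ, 1 ≤ σ → ∀ ω : ℕ, 0 < ω → ∀ s : List (ℝ × ℝ),
        LengthsIn σ s → Colorable ω s →
          (colorsUsed A s : ℝ) ≤ 1.618 * (ω : ℝ) + f σ := by
  rintro ⟨A, hproper, hbound⟩
  obtain ⟨K, hK⟩ := exists_nat_gt (14 * |f 100|)
  have hK0 : 0 < K := by exact_mod_cast (by positivity : 0 ≤ 14 * |f 100|).trans_lt hK
  obtain ⟨s, hs, -, hcol, hforced⟩ := (hproper 100 (by norm_num)).exists_forcing_sequence
    (hbound 100 (by norm_num)) hK0 6 (by norm_num)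
  have hub := hbound 100 (by norm_num) _ (by positivity) s hs hcol
  -- at least `207.632 K - 6 f(100)` colors forced, at most `207.104 K + f(100)` allowed
  norm_num at hforced hub
  linarith [le_abs_self (f 100)]
end

section
/- Let γ ∈ [0,1], let n and k be positive integers, and let X₁, …, X_{4^n} be finite sets, each of cardinality k. Then either |X₁ ∪ ⋯ ∪ X_{4^n}| ≥ ((3+γ)/3)^n · k, or the index sequence 1, 2, …, 4^n can be covered by four disjoint nonempty consecutive intervals [l₁,r₁], …, [l₄,r₄] with l₁ = 1, l_{i+1} = r_i + 1 for i = 1,2,3, and r₄ = 4^n, such that setting Y_i = ∪_{j=l_i}^{r_i} X_j, the intersection is large: |Y₁ ∩ Y₂ ∩ Y₃ ∩ Y₄| ≥ (1−γ)·k. -/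
/-!
Induct on `n`, splitting the `4^(n+1)` indices into four consecutive quarters of length `4^n`.
A good split inside one quarter is already a good split of the whole range, so we may assume
each quarter has a union of size at least `((3+γ)/3)^n k`. If the quarters themselves form a
good split we are done; otherwise the counting inequality
`|A| + |B| + |C| + |D| ≤ 3 |A ∪ B ∪ C ∪ D| + |A ∩ B ∩ C ∩ D|` forces
`3 |⋃| ≥ 4 ((3+γ)/3)^n k - (1-γ) k ≥ (3+γ) ((3+γ)/3)^n k`.
-/

open Finset

namespace Finset

variable {V : Type*} [DecidableEq V]

theorem card_add_card_add_card_add_card_le_s14 (A B C D : Finset V) :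
    #A + #B + #C + #D ≤ 3 * #(A ∪ B ∪ C ∪ D) + #(A ∩ B ∩ C ∩ D) := by
  have hAB := card_union_add_card_inter A B
  have hCD := card_union_add_card_inter C D
  have hUnion := card_union_add_card_inter (A ∪ B) (C ∪ D)
  have hInter := card_union_add_card_inter (A ∩ B) (C ∩ D)
  have hmid₁ : #((A ∪ B) ∩ (C ∪ D)) ≤ #(A ∪ B ∪ C ∪ D) :=
    card_le_card fun x => by simp only [mem_inter, mem_union]; tauto
  have hmid₂ : #(A ∩ B ∪ C ∩ D) ≤ #(A ∪ B ∪ C ∪ D) :=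
    card_le_card fun x => by simp only [mem_inter, mem_union]; tauto
  simp only [union_assoc, inter_assoc] at *
  omega

end Finset

section RichSplit

variable {V : Type*} [DecidableEq V] (X : ℕ → Finset V)

/-- The blocks `(lo, a]`, `(a, b]`, `(b, c]`, `(c, hi]` are the paper's intervals `[lᵢ, rᵢ]`. -/
def HasRichSplit (t : ℝ) (lo hi : ℕ) : Prop :=
  ∃ a b c : ℕ, lo < a ∧ a < b ∧ b < c ∧ c < hi ∧
    t ≤ (#((Ioc lo a).biUnion X ∩ (Ioc a b).biUnion X ∩ (Ioc b c).biUnion X ∩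
      (Ioc c hi).biUnion X) : ℝ)

variable {X}

theorem HasRichSplit.mono {t : ℝ} {lo hi lo' hi' : ℕ} (h : HasRichSplit X t lo hi)
    (hlo : lo' ≤ lo) (hhi : hi ≤ hi') : HasRichSplit X t lo' hi' := by
  obtain ⟨a, b, c, hla, hab, hbc, hch, hcard⟩ := h
  refine ⟨a, b, c, by omega, hab, hbc, by omega, hcard.trans ?_⟩
  gcongr

theorem sub_le_three_mul_card_biUnion_or_hasRichSplit {s t : ℝ} {lo a b c hi : ℕ}
    (hla : lo < a) (hab : a < b) (hbc : b < c) (hch : c < hi)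
    (h₁ : s ≤ #((Ioc lo a).biUnion X)) (h₂ : s ≤ #((Ioc a b).biUnion X))
    (h₃ : s ≤ #((Ioc b c).biUnion X)) (h₄ : s ≤ #((Ioc c hi).biUnion X)) :
    4 * s - t ≤ 3 * #((Ioc lo hi).biUnion X) ∨ HasRichSplit X t lo hi := by
  by_cases hI : t ≤ (#((Ioc lo a).biUnion X ∩ (Ioc a b).biUnion X ∩ (Ioc b c).biUnion X ∩
      (Ioc c hi).biUnion X) : ℝ)
  · exact Or.inr ⟨a, b, c, hla, hab, hbc, hch, hI⟩
  · have hcount := card_add_card_add_card_add_card_le_s14 ((Ioc lo a).biUnion X)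
      ((Ioc a b).biUnion X) ((Ioc b c).biUnion X) ((Ioc c hi).biUnion X)
    rw [← union_biUnion, Ioc_union_Ioc_eq_Ioc hla.le hab.le, ← union_biUnion,
      Ioc_union_Ioc_eq_Ioc (hla.trans hab).le hbc.le, ← union_biUnion,
      Ioc_union_Ioc_eq_Ioc (hla.trans hab |>.trans hbc).le hch.le] at hcount
    left
    have hcount' := (Nat.cast_le (α := ℝ)).mpr hcount
    push_cast at hcount'
    linarith

theorem le_card_biUnion_or_hasRichSplit {γ : ℝ} (hγ : γ ∈ Set.Icc (0 : ℝ) 1) {k : ℕ} (n lo : ℕ)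
    (hX : ∀ i ∈ Ioc lo (lo + 4 ^ n), k ≤ #(X i)) :
    ((3 + γ) / 3) ^ n * k ≤ #((Ioc lo (lo + 4 ^ n)).biUnion X) ∨
      HasRichSplit X ((1 - γ) * k) lo (lo + 4 ^ n) := by
  induction n generalizing lo with
  | zero =>
    left
    rw [pow_zero, pow_zero, one_mul, Nat.Ioc_succ_singleton, singleton_biUnion]
    exact_mod_cast hX (lo + 1) (by simp)
  | succ n ih =>
    set m := 4 ^ n
    have hhi : lo + 4 ^ (n + 1) = lo + m + m + m + m := by rw [pow_succ]; ring
    rw [hhi] at hX ⊢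
    by_cases hsplit : HasRichSplit X ((1 - γ) * k) lo (lo + m + m + m + m)
    · exact Or.inr hsplit
    have hquarter : ∀ a, lo ≤ a → a + m ≤ lo + m + m + m + m →
        ((3 + γ) / 3) ^ n * k ≤ #((Ioc a (a + m)).biUnion X) := fun a hlo hhi =>
      (ih a fun i hi => hX i (by simp only [mem_Ioc] at hi ⊢; omega)).resolve_right
        fun h => hsplit (h.mono hlo hhi)
    have hm : 0 < m := by positivity
    refine (sub_le_three_mul_card_biUnion_or_hasRichSplit (by omega) (by omega) (by omega)
      (by omega) (hquarter lo le_rfl (by omega)) (hquarter (lo + m) (by omega) (by omega))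
      (hquarter (lo + m + m) (by omega) (by omega))
      (hquarter (lo + m + m + m) (by omega) le_rfl)).imp (fun hcard => ?_) id
    have hr : 1 ≤ ((3 + γ) / 3) ^ n := one_le_pow₀ (by linarith [hγ.1])
    have hk : (1 - γ) * k ≤ (1 - γ) * k * ((3 + γ) / 3) ^ n :=
      le_mul_of_one_le_right (mul_nonneg (by linarith [hγ.2]) k.cast_nonneg) hr
    rw [pow_succ]
    linarith

end RichSplit

theorem stmt_14_general {V : Type*} [DecidableEq V] (γ : ℝ) (hγ : γ ∈ Set.Icc (0 : ℝ) 1)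
    (n k : ℕ) (X : ℕ → Finset V)
    (hX : ∀ i ∈ Finset.Icc 1 (4 ^ n), (X i).card = k) :
    (((3 + γ) / 3) ^ n * (k : ℝ) ≤ (((Finset.Icc 1 (4 ^ n)).biUnion X).card : ℝ)) ∨
    ∃ a b c : ℕ, 1 ≤ a ∧ a < b ∧ b < c ∧ c < 4 ^ n ∧
      (1 - γ) * (k : ℝ) ≤
        ((((Finset.Icc 1 a).biUnion X) ∩ ((Finset.Icc (a + 1) b).biUnion X) ∩
          ((Finset.Icc (b + 1) c).biUnion X) ∩
          ((Finset.Icc (c + 1) (4 ^ n)).biUnion X)).card : ℝ) := by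
  have h := le_card_biUnion_or_hasRichSplit hγ n 0 (X := X) fun i hi =>
    (hX i (by rw [← Icc_add_one_left_eq_Ioc] at hi; simpa using hi)).ge
  simpa only [HasRichSplit, Nat.lt_iff_add_one_le, zero_add, ← Icc_add_one_left_eq_Ioc] using h

theorem stmt_14 {V : Type*} [DecidableEq V] (γ : ℝ) (hγ : γ ∈ Set.Icc (0 : ℝ) 1)
    (n k : ℕ) (hn : 0 < n) (hk : 0 < k) (X : ℕ → Finset V)
    (hX : ∀ i ∈ Finset.Icc 1 (4 ^ n), (X i).card = k) :
    (((3 + γ) / 3) ^ n * (k : ℝ) ≤ (((Finset.Icc 1 (4 ^ n)).biUnion X).card : ℝ)) ∨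
    ∃ a b c : ℕ, 1 ≤ a ∧ a < b ∧ b < c ∧ c < 4 ^ n ∧
      (1 - γ) * (k : ℝ) ≤
        ((((Finset.Icc 1 a).biUnion X) ∩ ((Finset.Icc (a + 1) b).biUnion X) ∩
          ((Finset.Icc (b + 1) c).biUnion X) ∩
          ((Finset.Icc (c + 1) (4 ^ n)).biUnion X)).card : ℝ) :=
  stmt_14_general γ hγ n k X hX
end
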